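/- (Corollary of Theorem 3) Let Λ be strictly convex, continuously differentiable on [0,∞) with Λ(0) = 0 and inf_{s≥0} Λ(s) < −log d (d ≥ 2), and suppose Λ'(0) = −μ < 0. Let s₀ = (Λ')⁻¹, Λ*(z) = z·s₀(z) − Λ(s₀(z)) for z ≥ Λ'(0), f(u) = (log d − Λ*(−u))/u, and M = max_{u ∈ (0,μ]} f(u). Then M = min{s ≥ 0 : Λ(s) = −log d}. -/
import Mathlib


/-- Corollary of Theorem 3: with `Λ` strictly convex, `C¹` on
`[0,∞)`, `Λ 0 = 0`, `Λ'(0) = -μ < 0`, `inf Λ < -log d`, `s₀ = (Λ')⁻¹`,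
`Λ*(z) = z * s₀ z - Λ (s₀ z)` for `z ≥ Λ'(0)`, `f u = (log d - Λ*(-u)) / u`
and `M = max_{u ∈ (0,μ]} f u`, we have `M = min {s ≥ 0 : Λ s = -log d}`. -/
theorem stmt7 (d : ℕ) (hd : 2 ≤ d) (μ : ℝ) (hμ : 0 < μ)
    (Λ : ℝ → ℝ) (hconv : StrictConvexOn ℝ (Set.Ici (0 : ℝ)) Λ)
    (hdiff : ∀ s ∈ Set.Ici (0 : ℝ), DifferentiableAt ℝ Λ s)
    (hC1 : ContinuousOn (deriv Λ) (Set.Ici (0 : ℝ)))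
    (hΛ0 : Λ 0 = 0) (hΛ'0 : deriv Λ 0 = -μ)
    (hinf : ∃ s : ℝ, 0 ≤ s ∧ Λ s < -Real.log d)
    (s₀ : ℝ → ℝ)
    (hs₀ : ∀ z : ℝ, deriv Λ 0 ≤ z → 0 ≤ s₀ z ∧ deriv Λ (s₀ z) = z)
    (Lstar : ℝ → ℝ)
    (hL : ∀ z : ℝ, deriv Λ 0 ≤ z → Lstar z = z * s₀ z - Λ (s₀ z))
    (f : ℝ → ℝ) (hf : ∀ u : ℝ, f u = (Real.log d - Lstar (-u)) / u)
    (M : ℝ) (hM : IsGreatest (f '' Set.Ioc (0 : ℝ) μ) M) :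
    IsLeast {s : ℝ | 0 ≤ s ∧ Λ s = -Real.log d} M := by
  have hcont : ContinuousOn Λ (Set.Ici 0) :=
    fun s hs => (hdiff s hs).continuousAt.continuousWithinAt
  have h1d : (1 : ℝ) < d := by exact_mod_cast Nat.lt_of_lt_of_le Nat.one_lt_two hd
  have hlogd : 0 < Real.log d := Real.log_pos h1d
  have hmono : StrictMonoOn (deriv Λ) (Set.Ici 0) := hconv.strictMonoOn_deriv hdiff
  -- supporting line inequality
  have support : ∀ x ∈ Set.Ici (0:ℝ), ∀ s ∈ Set.Ici (0:ℝ),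
      Λ x + deriv Λ x * (s - x) ≤ Λ s := by
    intro x hx s hs
    rcases lt_trichotomy x s with h | h | h
    · have h2 := hconv.deriv_lt_slope hx hs h (hdiff x hx)
      rw [slope_def_field, lt_div_iff₀ (by linarith : (0:ℝ) < s - x)] at h2
      nlinarith
    · subst h; simp
    · have h2 := hconv.slope_lt_deriv hs hx h (hdiff x hx)
      rw [slope_def_field, div_lt_iff₀ (by linarith : (0:ℝ) < x - s)] at h2
      nlinarith
  set S : Set ℝ := {s : ℝ | 0 ≤ s ∧ Λ s = -Real.log d} with hSdef
  -- S nonempty by IVT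
  obtain ⟨s₁, hs₁0, hs₁⟩ := hinf
  have hroot : ∀ b : ℝ, 0 ≤ b → Λ b ≤ -Real.log d → ∃ c, 0 ≤ c ∧ c ≤ b ∧ c ∈ S := by
    intro b hb hΛb
    have hsub : Set.Icc (0:ℝ) b ⊆ Set.Ici 0 := fun y hy => hy.1
    have hmem : -Real.log d ∈ Set.Icc (Λ b) (Λ 0) := ⟨hΛb, by rw [hΛ0]; linarith⟩
    obtain ⟨c, hc, hc2⟩ := intermediate_value_Icc' hb (hcont.mono hsub) hmem
    exact ⟨c, hc.1, hc.2, ⟨hc.1, hc2⟩⟩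
  obtain ⟨c₀, hc₀0, _, hc₀S⟩ := hroot s₁ hs₁0 hs₁.le
  have hSne : S.Nonempty := ⟨c₀, hc₀S⟩
  have hSbdd : BddBelow S := ⟨0, fun x hx => hx.1⟩
  have hSclosed : IsClosed S := by
    have : S = Set.Ici 0 ∩ Λ ⁻¹' {-Real.log d} := by
      ext x; simp [hSdef, Set.mem_setOf_eq, and_comm]
    rw [this]
    exact hcont.preimage_isClosed_of_isClosed isClosed_Ici isClosed_singleton
  set sm := sInf S with hsm
  have hsmS : sm ∈ S := hSclosed.csInf_mem hSne hSbdd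
  have hsmle : ∀ r ∈ S, sm ≤ r := fun r hr => csInf_le hSbdd hr
  have hsmpos : 0 < sm := by
    rcases hsmS.1.lt_or_eq with h | h
    · exact h
    · exfalso; have := hsmS.2; rw [← h, hΛ0] at this; linarith
  -- M ≤ r for every r ∈ S
  have upper : ∀ r ∈ S, M ≤ r := by
    intro r hr
    obtain ⟨u, hu, hfu⟩ := hM.1
    have hz : deriv Λ 0 ≤ -u := by rw [hΛ'0]; linarith [hu.2]
    obtain ⟨hs0pos, hs0d⟩ := hs₀ (-u) hz
    have hkey : -u * r - Λ r ≤ Lstar (-u) := by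
      rw [hL _ hz]
      have := support (s₀ (-u)) hs0pos r hr.1
      rw [hs0d] at this; linarith
    rw [← hfu, hf, div_le_iff₀ hu.1]
    have hΛr : Λ r = -Real.log d := hr.2
    nlinarith
  -- s ≤ M for all 0 ≤ s < sm
  have lower : ∀ s : ℝ, 0 ≤ s → s < sm → s ≤ M := by
    intro s hs0 hssm
    have hΛs : -Real.log d < Λ s := by
      rcases lt_trichotomy (Λ s) (-Real.log d) with h | h | h
      · obtain ⟨c, hc0, hcs, hcS⟩ := hroot s hs0 h.le
        exact absurd (hsmle c hcS) (by linarith)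
      · exact absurd (hsmle s ⟨hs0, h⟩) (by linarith)
      · exact h
    have hderiv_lt : deriv Λ s < 0 := by
      have h2 := hconv.deriv_lt_slope hs0 hsmS.1 hssm (hdiff s hs0)
      rw [slope_def_field] at h2
      have : (Λ sm - Λ s) / (sm - s) < 0 := by
        apply div_neg_of_neg_of_pos _ (by linarith)
        rw [hsmS.2]; linarith
      linarith
    have hderiv_ge : -μ ≤ deriv Λ s := by
      rw [← hΛ'0]
      rcases hs0.lt_or_eq with h | h
      · exact (hmono (le_refl (0:ℝ)) hs0 h).le
      · rw [← h]
    set u : ℝ := -deriv Λ s with hu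
    have hupos : 0 < u := by simp [hu]; linarith
    have hule : u ≤ μ := by simp [hu]; linarith
    have hz : deriv Λ 0 ≤ -u := by rw [hΛ'0, hu, neg_neg]; exact hderiv_ge
    obtain ⟨hs0pos, hs0d⟩ := hs₀ (-u) hz
    have hs0eq : s₀ (-u) = s := by
      apply hmono.injOn hs0pos hs0
      rw [hs0d, hu, neg_neg]
    have hLs : Lstar (-u) = -u * s - Λ s := by
      rw [hL _ hz, hs0eq]
    have hfu : s ≤ f u := by
      rw [hf, hLs, le_div_iff₀ hupos]
      nlinarith
    exact hfu.trans (hM.2 ⟨u, ⟨hupos, hule⟩, rfl⟩)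
  have hMsm : M = sm := by
    refine le_antisymm (upper sm hsmS) ?_
    by_contra hlt
    push_neg at hlt
    have h1 : (0:ℝ) ≤ max 0 ((M + sm) / 2) := le_max_left _ _
    have h2 : max 0 ((M + sm) / 2) < sm := max_lt hsmpos (by linarith)
    have h3 := lower _ h1 h2
    linarith [le_max_right (0:ℝ) ((M + sm) / 2)]
  exact ⟨by rw [hMsm]; exact hsmS, upper⟩
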